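/- In the free group on two generators a and b, the commutator [a,b] = a⁻¹b⁻¹ab is not a proper power: there is no element w and integer n with |n| ≥ 2 such that [a,b] = wⁿ. -/
import Mathlib

/-- Heisenberg-type group: triples with multiplication
`(a,b,c)(a',b',c') = (a+a', b+b', c+c'+a*b')`. -/
@[ext]
structure Heis (R : Type*) [CommRing R] where
  a : R
  b : R
  c : R

namespace Heis

variable {R : Type*} [CommRing R]

instance : Mul (Heis R) := ⟨fun x y => ⟨x.a + y.a, x.b + y.b, x.c + y.c + x.a * y.b⟩⟩
instance : One (Heis R) := ⟨⟨0, 0, 0⟩⟩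
instance : Inv (Heis R) := ⟨fun x => ⟨-x.a, -x.b, -x.c + x.a * x.b⟩⟩

@[simp] lemma mul_a (x y : Heis R) : (x * y).a = x.a + y.a := rfl
@[simp] lemma mul_b (x y : Heis R) : (x * y).b = x.b + y.b := rfl
@[simp] lemma mul_c (x y : Heis R) : (x * y).c = x.c + y.c + x.a * y.b := rfl
@[simp] lemma one_a : (1 : Heis R).a = 0 := rfl
@[simp] lemma one_b : (1 : Heis R).b = 0 := rfl
@[simp] lemma one_c : (1 : Heis R).c = 0 := rfl
@[simp] lemma inv_a (x : Heis R) : x⁻¹.a = -x.a := rfl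
@[simp] lemma inv_b (x : Heis R) : x⁻¹.b = -x.b := rfl
@[simp] lemma inv_c (x : Heis R) : x⁻¹.c = -x.c + x.a * x.b := rfl

instance : Group (Heis R) where
  mul_assoc x y z := by ext <;> simp <;> ring
  one_mul x := by ext <;> simp
  mul_one x := by ext <;> simp
  inv_mul_cancel x := by ext <;> simp <;> ring

lemma pow_def (x : Heis R) (n : ℕ) :
    x ^ n = ⟨(n : R) * x.a, (n : R) * x.b,
      (n : R) * x.c + (n.choose 2 : R) * (x.a * x.b)⟩ := by
  induction n with
  | zero => ext <;> simp
  | succ n ih =>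
    rw [pow_succ, ih]
    ext <;> simp [Nat.choose_succ_succ, Nat.choose_one_right] <;> push_cast <;> ring

/-- The central element `(0,0,1)` is not a `p`-th power in `Heis (ZMod (p^2))`. -/
lemma not_pow_prime (p : ℕ) (hp : p.Prime) (g : Heis (ZMod (p ^ 2))) :
    g ^ p ≠ ⟨0, 0, 1⟩ := by
  intro h
  rw [pow_def] at h
  rw [Heis.mk.injEq] at h
  obtain ⟨ha, hb, hc⟩ := h
  rcases eq_or_ne p 2 with h2 | h2
  · subst h2
    revert ha hc
    have : ∀ x y z : ZMod (2 ^ 2),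
        (2 : ZMod (2 ^ 2)) * x = 0 →
        (2 : ZMod (2 ^ 2)) * z + ((Nat.choose 2 2 : ℕ) : ZMod (2 ^ 2)) * (x * y) = 1 → False := by
      decide
    exact this g.a g.b g.c
  · have hodd : 2 < p := lt_of_le_of_ne hp.two_le (Ne.symm h2)
    have hd : p ∣ p.choose 2 := hp.dvd_choose_self (by norm_num) hodd
    obtain ⟨k, hk⟩ := hd
    haveI := Fact.mk hp
    have hdvd : p ∣ p ^ 2 := dvd_pow_self p (by norm_num)
    have := congrArg (ZMod.castHom hdvd (ZMod p)) hc
    simp only [map_add, map_mul, map_natCast, map_one, hk, Nat.cast_mul,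
      ZMod.natCast_self, zero_mul, add_zero, mul_zero, zero_add] at this
    exact one_ne_zero this.symm

end Heis

lemma exists_prime_pow {G : Type*} [Group G] {c : G}
    (h : ∃ (w : G) (n : ℤ), 2 ≤ |n| ∧ c = w ^ n) :
    ∃ (p : ℕ) (u : G), p.Prime ∧ c = u ^ p := by
  obtain ⟨w, n, hn, hc⟩ := h
  set m := n.natAbs with hm
  have hm2 : 2 ≤ m := by
    have := Int.abs_eq_natAbs n
    omega
  have hv : ∃ v : G, c = v ^ m := by
    rcases Int.natAbs_eq n with h' | h'
    · exact ⟨w, by rw [hc, h', zpow_natCast]⟩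
    · refine ⟨w⁻¹, ?_⟩
      rw [hc, h', zpow_neg, zpow_natCast, ← inv_pow]
  obtain ⟨v, hv⟩ := hv
  have hp : (m.minFac).Prime := Nat.minFac_prime (by omega)
  refine ⟨m.minFac, v ^ (m / m.minFac), hp, ?_⟩
  rw [hv, ← pow_mul, Nat.div_mul_cancel m.minFac_dvd]

/-- In the free group on two generators `a`, `b`, the commutator `[a,b] = a⁻¹b⁻¹ab`
is not a proper power: there is no `w` and integer `n` with `|n| ≥ 2` such that
`[a,b] = wⁿ`. -/
theorem commutator_not_proper_power :
    let a : FreeGroup Bool := FreeGroup.of false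
    let b : FreeGroup Bool := FreeGroup.of true
    ¬ ∃ (w : FreeGroup Bool) (n : ℤ), 2 ≤ |n| ∧ a⁻¹ * b⁻¹ * a * b = w ^ n := by
  intro a b h
  obtain ⟨p, u, hp, hc⟩ := exists_prime_pow h
  let φ : FreeGroup Bool →* Heis (ZMod (p ^ 2)) :=
    FreeGroup.lift (fun t => if t then ⟨0, 1, 0⟩ else ⟨1, 0, 0⟩)
  have hφ : φ (a⁻¹ * b⁻¹ * a * b) = ⟨0, 0, 1⟩ := by
    simp only [map_mul, map_inv, φ, FreeGroup.lift_apply_of, a, b, if_true, if_false]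
    ext <;> simp <;> ring
  have := congrArg φ hc
  rw [hφ, map_pow] at this
  exact Heis.not_pow_prime p hp (φ u) this.symm
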